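/- Minty's lemma: let X be a reflexive Banach space, C ⊆ X a nonempty closed convex set, and A : X → X* a monotone operator continuous on finite-dimensional subspaces (hemicontinuous). Then u ∈ C satisfies ⟨A u, v - u⟩ ≥ 0 for all v ∈ C if and only if ⟨A v, v - u⟩ ≥ 0 for all v ∈ C. -/

import Mathlib

open MeasureTheory Metric Set Filter Topology Bornology
open scoped RealInnerProductSpace NNReal ENNReal

noncomputable section

/-- The plane `ℝ²`. -/
abbrev E2 : Type := EuclideanSpace ℝ (Fin 2)

/-- Smooth test functions compactly supported in `U`. -/
def IsTestOn (U : Set E2) (φ : E2 → ℝ) : Prop :=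
  ContDiff ℝ (⊤ : ℕ∞) φ ∧ HasCompactSupport φ ∧ tsupport φ ⊆ U

/-- `g` is the (distributional) gradient of `u` on the open set `U`. -/
def HasWeakGradOn (u : E2 → ℝ) (g : E2 → E2) (U : Set E2) : Prop :=
  ∀ φ : E2 → ℝ, IsTestOn U φ →
    ∫ x in U, u x • gradient φ x = - ∫ x in U, φ x • g x

/-- `u ∈ L^p_loc(U)`. -/
def MemLpLocOn (p : ℝ) (U : Set E2) (u : E2 → ℝ) : Prop :=
  ∀ K : Set E2, IsCompact K → K ⊆ U → MemLp u (ENNReal.ofReal p) (volume.restrict K)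

/-- The Deny–Lions space `L^{1,p}(U)`: `u ∈ L^p_loc(U)` with weak gradient `g ∈ L^p(U,ℝ²)`. -/
def MemDenyLions (p : ℝ) (U : Set E2) (u : E2 → ℝ) (g : E2 → E2) : Prop :=
  MemLpLocOn p U u ∧ HasWeakGradOn u g U ∧
    MemLp g (ENNReal.ofReal p) (volume.restrict U)

/-- The Sobolev space `W^{1,p}(U)` (as a predicate on `(u, ∇u)`). -/
def MemW1p (p : ℝ) (U : Set E2) (u : E2 → ℝ) (g : E2 → E2) : Prop :=
  MemLp u (ENNReal.ofReal p) (volume.restrict U) ∧ HasWeakGradOn u g U ∧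
    MemLp g (ENNReal.ofReal p) (volume.restrict U)

/-- The Sobolev space `W^{1,p}_0(B)`: members of `W^{1,p}(B)` approximable in the
`W^{1,p}` norm by smooth functions compactly supported in `B`. -/
def MemW1p0 (p : ℝ) (B : Set E2) (u : E2 → ℝ) (g : E2 → E2) : Prop :=
  MemW1p p B u g ∧
  ∀ ε > 0, ∃ φ : E2 → ℝ, IsTestOn B φ ∧
    eLpNorm (fun x => u x - φ x) (ENNReal.ofReal p) (volume.restrict B) < ENNReal.ofReal ε ∧
    eLpNorm (fun x => g x - gradient φ x) (ENNReal.ofReal p) (volume.restrict B)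
      < ENNReal.ofReal ε

/-- The `(1,r)`-capacity of `E` in `B`:
`inf { ∫_B |∇u|^r : u ∈ W^{1,r}_0(B), u ≥ 1 a.e. on a neighborhood of E }`. -/
def capacity (r : ℝ) (E B : Set E2) : ℝ :=
  sInf { c : ℝ | ∃ u g, MemW1p0 r B u g ∧
      (∃ N : Set E2, IsOpen N ∧ E ⊆ N ∧ ∀ᵐ x ∂(volume.restrict N), 1 ≤ u x) ∧
      c = ∫ x in B, ‖g x‖ ^ r }

/-- A set is `C_r`-null if it has zero `(1,r)`-capacity in every bounded open set containing it. -/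
def CapNull (r : ℝ) (N : Set E2) : Prop :=
  ∀ B : Set E2, IsOpen B → IsBounded B → N ⊆ B → capacity r N B = 0

/-- `ubar` is a quasi-continuous representative of `u` (w.r.t. the `(1,r)`-capacity),
defined on `closure U`. -/
def QCRep (r : ℝ) (U : Set E2) (u ubar : E2 → ℝ) : Prop :=
  (∀ᵐ x ∂(volume.restrict U), ubar x = u x) ∧
  ∀ ε > 0, ∃ A : Set E2,
    (∃ B : Set E2, IsOpen B ∧ IsBounded B ∧ A ⊆ B ∧ capacity r A B < ε) ∧
    ContinuousOn ubar (closure U \ A)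

/-- `u = v` `C_r`-quasi everywhere on `S` (via quasi-continuous representatives on `U`). -/
def EqQeOn (r : ℝ) (U S : Set E2) (u v : E2 → ℝ) : Prop :=
  ∃ ubar vbar, QCRep r U u ubar ∧ QCRep r U v vbar ∧
    ∃ N : Set E2, CapNull r N ∧ ∀ x ∈ S \ N, ubar x = vbar x

/-- Standing assumptions on the volume density `f`:
Borel, `p`-growth `α|ξ|^p ≤ f(x,ξ) ≤ β|ξ|^p + γ`, and `f(x,·)` strictly convex and `C¹`. -/
structure PGrowth (p α β γ : ℝ) (Ω : Set E2) (f : E2 → E2 → ℝ) : Prop where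
  measurable : Measurable (Function.uncurry f)
  lower : ∀ᵐ x ∂(volume.restrict Ω), ∀ ξ : E2, α * ‖ξ‖ ^ p ≤ f x ξ
  upper : ∀ᵐ x ∂(volume.restrict Ω), ∀ ξ : E2, f x ξ ≤ β * ‖ξ‖ ^ p + γ
  strictConvex : ∀ᵐ x ∂(volume.restrict Ω), StrictConvexOn ℝ Set.univ (f x)
  smooth : ∀ᵐ x ∂(volume.restrict Ω), ContDiff ℝ 1 (f x)

/-- `f_ξ(x,ξ)`: the gradient of `f(x,·)` at `ξ`. -/
def fxi (f : E2 → E2 → ℝ) (x ξ : E2) : E2 := gradient (f x) ξ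

/-- Admissible pairs for the minimum problem: `u ∈ L^{1,p}(Ω \ K)` with `u = g`
`C_p`-q.e. on `∂_D Ω \ K`. -/
def Admissible (p : ℝ) (Ω DΩ K : Set E2) (g u : E2 → ℝ) (Gu : E2 → E2) : Prop :=
  MemDenyLions p (Ω \ K) u Gu ∧ EqQeOn p (Ω \ K) (DΩ \ K) u g

/-- `u` solves `min { ∫_{Ω\K} f(x,∇v) : v ∈ L^{1,p}(Ω\K), v = g on ∂_D Ω \ K }`. -/
def IsMinimizer (p : ℝ) (f : E2 → E2 → ℝ) (Ω DΩ K : Set E2)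
    (g u : E2 → ℝ) (Gu : E2 → E2) : Prop :=
  Admissible p Ω DΩ K g u Gu ∧
  ∀ v Gv, Admissible p Ω DΩ K g v Gv →
    ∫ x in Ω \ K, f x (Gu x) ≤ ∫ x in Ω \ K, f x (Gv x)

/-- `K` has at most `m` connected components. -/
def AtMostComponents (m : ℕ) (K : Set E2) : Prop :=
  ∃ C : Fin m → Set E2, (∀ i, IsPreconnected (C i)) ∧ K = ⋃ i, C i

/-- `C` is a connected component of `S`. -/
def IsCompOf (C S : Set E2) : Prop := ∃ x ∈ S, C = connectedComponentIn S x

open Classical in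
/-- `dist(x, K)` with the paper's convention `dist(x, ∅) = diam Ω`. -/
def paperDist (Ω : Set E2) (x : E2) (K : Set E2) : ℝ :=
  if K = ∅ then diam Ω else infDist x K

/-- Hausdorff distance with the paper's conventions (`sup ∅ = 0`). -/
def dH (Ω K1 K2 : Set E2) : ℝ :=
  max (sSup ((fun x => paperDist Ω x K2) '' K1))
      (sSup ((fun x => paperDist Ω x K1) '' K2))

/-- Convergence of the sequence `K h` to `L` in the Hausdorff metric. -/
def HConv (Ω : Set E2) (K : ℕ → Set E2) (L : Set E2) : Prop :=
  Tendsto (fun h => dH Ω (K h) L) atTop (nhds 0)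

/-- Weak convergence in `L^p(U,ℝ²)`, tested against `L^q(U,ℝ²)` functions. -/
def WeakLpVec (q : ℝ) (U : Set E2) (F : ℕ → E2 → E2) (G : E2 → E2) : Prop :=
  ∀ ψ : E2 → E2, MemLp ψ (ENNReal.ofReal q) (volume.restrict U) →
    Tendsto (fun n => ∫ x in U, ⟪F n x, ψ x⟫) atTop (nhds (∫ x in U, ⟪G x, ψ x⟫))

/-- The energy `E(u,K) = ∫_{Ω\K} f(x,∇u) dx + H¹(K)` (valued in `ℝ≥0∞`). -/
def energy (f : E2 → E2 → ℝ) (Ω K : Set E2) (Gu : E2 → E2) : ℝ≥0∞ :=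
  ENNReal.ofReal (∫ x in Ω \ K, f x (Gu x)) + μH[1] K

/-- `(u, K)` is a unilateral minimizer of the energy relative to the datum `g`. -/
def UnilateralMin (p : ℝ) (m : ℕ) (f : E2 → E2 → ℝ) (Ω DΩ K : Set E2)
    (g u : E2 → ℝ) (Gu : E2 → E2) : Prop :=
  Admissible p Ω DΩ K g u Gu ∧
  ∀ H : Set E2, IsCompact H → H ⊆ closure Ω → K ⊆ H → AtMostComponents m H →
    ∀ v Gv, Admissible p Ω DΩ H g v Gv →
      energy f Ω K Gu ≤ energy f Ω H Gv

/-- `U ⊂ ℝ²` has Lipschitz continuous boundary: near each boundary point, after a rigid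
motion, `U` is the open epigraph of a Lipschitz function. -/
def HasLipschitzBoundary (U : Set E2) : Prop :=
  ∀ x ∈ frontier U, ∃ (e : E2 ≃ₗᵢ[ℝ] E2) (f : ℝ → ℝ) (L : ℝ≥0) (ε : ℝ),
    0 < ε ∧ LipschitzWith L f ∧
    ∀ y ∈ ball x ε, (y ∈ U ↔ f (e (y - x) 0) < e (y - x) 1)

/-- `S` is relatively open in `T`. -/
def RelOpenIn (S T : Set E2) : Prop := ∃ V : Set E2, IsOpen V ∧ S = V ∩ T

/-- Counterclockwise rotation by `π/2`: `R(y₁,y₂) = (-y₂, y₁)`. -/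
def Rot (y : E2) : E2 := WithLp.toLp 2 (fun i => if i = 0 then -(y 1) else y 0)

/-- Minty's lemma: for a monotone hemicontinuous operator `A` on a reflexive
Banach space and a nonempty closed convex `C`, the two variational inequalities agree. -/
theorem minty_lemma
    (X : Type) [NormedAddCommGroup X] [NormedSpace ℝ X] [CompleteSpace X]
    (hrefl : Function.Surjective ((NormedSpace.inclusionInDoubleDual ℝ X : X →L[ℝ] _)))
    (C : Set X) (hCc : IsClosed C) (hCconv : Convex ℝ C) (hCne : C.Nonempty)
    (A : X → StrongDual ℝ X)
    (hmono : ∀ u v : X, 0 ≤ (A u - A v) (u - v))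
    (hhemi : ∀ u v w : X, Continuous fun t : ℝ => A (u + t • v) w)
    (u : X) (hu : u ∈ C) :
    (∀ v ∈ C, 0 ≤ A u (v - u)) ↔ (∀ v ∈ C, 0 ≤ A v (v - u)) := by
  constructor
  · intro h v hv
    have hm := hmono v u
    have : (A v - A u) (v - u) = A v (v - u) - A u (v - u) := by
      simp [ContinuousLinearMap.sub_apply]
    linarith [h v hv, this ▸ hm]
  · intro h v hv
    set f : ℝ → ℝ := fun t => A (u + t • (v - u)) (v - u) with hf
    have hcont : Continuous f := hhemi u (v - u) (v - u)
    have hnn : ∀ t ∈ Set.Ioc (0:ℝ) 1, 0 ≤ f t := by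
      intro t ht
      have hw : u + t • (v - u) ∈ C := by
        have := hCconv hu hv (by linarith [ht.2] : (0:ℝ) ≤ 1 - t)
          (le_of_lt ht.1) (by ring)
        convert this using 1
        module
      have h0 := h _ hw
      have : u + t • (v - u) - u = t • (v - u) := by module
      rw [this] at h0
      simp only [_root_.map_smul, smul_eq_mul] at h0
      nlinarith [h0, ht.1]
    have hf0 : f 0 = A u (v - u) := by simp [hf]
    have htend : Filter.Tendsto f (nhdsWithin 0 (Set.Ioc 0 1)) (nhds (f 0)) :=
      (hcont.tendsto 0).mono_left nhdsWithin_le_nhds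
    have hne : (nhdsWithin (0:ℝ) (Set.Ioc 0 1)).NeBot := by
      apply mem_closure_iff_nhdsWithin_neBot.mp
      rw [closure_Ioc (by norm_num : (0:ℝ) ≠ 1)]
      exact ⟨le_refl 0, by norm_num⟩
    rw [← hf0]
    exact ge_of_tendsto htend (eventually_nhdsWithin_of_forall hnn)


end
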